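/- For both OneMinMax and LOTZ, the crowding distance contribution CDC(·, P) is diversity-favouring on {0,1}ⁿ \ {0ⁿ, 1ⁿ}: for every population P of mutually non-dominated points and all Pareto-optimal x, y ∈ P with x, y ∉ {0ⁿ, 1ⁿ}, if x is bad and y is good then CDC(x, P) < CDC(y, P). -/

import Mathlib

/-! A bad point `x ∉ {0ⁿ, 1ⁿ}` has Pareto-optimal Hamming neighbours whose objective values are
shifted by `-1` and by `+1` in each objective, and all their objective vectors occur in `P`. So in
each objective the predecessor and the successor of `x` in `P` are at distance exactly `1`, and
`CDC(x) = 2/Δ₁ + 2/Δ₂`, where `Δₘ` is the spread of objective `m` over `P`. A good point `y` has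
a Pareto-optimal neighbour whose objective vector is missing from `P`; then one of the values
adjacent to `y` in some objective is missing from `P` altogether (for LOTZ, a point of `P` with
that value but a different vector would be dominated by `y`). In that objective `y` is a boundary
point or its neighbours are at distance at least `3`, so `CDC(y) > 2/Δ₁ + 2/Δ₂`. -/

noncomputable section
open scoped ENNReal
attribute [local instance] Classical.propDecidable

namespace EMO


/-- A bit string of length `n`. -/
abbrev BitString (n : ℕ) := Fin n → Bool

/-- Number of one-bits. -/
def onesCount {n : ℕ} (x : BitString n) : ℕ :=
  (Finset.univ.filter fun i => x i = true).card

def allOnes (n : ℕ) : BitString n := fun _ => true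
def allZeros (n : ℕ) : BitString n := fun _ => false

/-- The bi-objective function OneMinMax. -/
def OneMinMax {n : ℕ} (x : BitString n) : ℤ × ℤ :=
  ((onesCount x : ℤ), (n : ℤ) - (onesCount x : ℤ))

/-- Number of leading ones. -/
def leadingOnes {n : ℕ} (x : BitString n) : ℕ :=
  (Finset.univ.filter fun i : Fin n => ∀ j : Fin n, j ≤ i → x j = true).card

/-- Number of trailing zeros. -/
def trailingZeros {n : ℕ} (x : BitString n) : ℕ :=
  (Finset.univ.filter fun i : Fin n => ∀ j : Fin n, i ≤ j → x j = false).card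

/-- The bi-objective function LOTZ. -/
def LOTZ {n : ℕ} (x : BitString n) : ℤ × ℤ :=
  ((leadingOnes x : ℤ), (trailingZeros x : ℤ))

/-- `y` dominates `x` (maximisation). -/
def dominates {n : ℕ} (f : BitString n → ℤ × ℤ) (y x : BitString n) : Prop :=
  (f x).1 ≤ (f y).1 ∧ (f x).2 ≤ (f y).2 ∧ f x ≠ f y

/-- `y` weakly dominates `x` (maximisation). -/
def weaklyDominates {n : ℕ} (f : BitString n → ℤ × ℤ) (y x : BitString n) : Prop :=
  (f x).1 ≤ (f y).1 ∧ (f x).2 ≤ (f y).2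

/-- Pareto optimality. -/
def paretoOptimal {n : ℕ} (f : BitString n → ℤ × ℤ) (x : BitString n) : Prop :=
  ¬ ∃ y : BitString n, dominates f y x

/-- A population of mutually non-dominated points. -/
def mutuallyNonDominated {n : ℕ} (f : BitString n → ℤ × ℤ)
    (P : Finset (BitString n)) : Prop :=
  ∀ x ∈ P, ∀ y ∈ P, ¬ dominates f y x

/-- Flip bit `i` of `x`. -/
def flipBit {n : ℕ} (x : BitString n) (i : Fin n) : BitString n :=
  Function.update x i (!x i)

/-- `y` is a Hamming neighbour of `x`. -/
def hammingNeighbour {n : ℕ} (x y : BitString n) : Prop :=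
  ∃ i : Fin n, y = flipBit x i

/-- `x` is good relative to population `P`: it is Pareto optimal and has a Pareto-optimal
Hamming neighbour whose objective vector is not attained by any member of `P`. -/
def isGood {n : ℕ} (f : BitString n → ℤ × ℤ) (P : Finset (BitString n))
    (x : BitString n) : Prop :=
  paretoOptimal f x ∧
    ∃ y : BitString n, hammingNeighbour x y ∧ paretoOptimal f y ∧ ∀ z ∈ P, f z ≠ f y

/-- `x` is bad relative to population `P`. -/
def isBad {n : ℕ} (f : BitString n → ℤ × ℤ) (P : Finset (BitString n))
    (x : BitString n) : Prop :=
  paretoOptimal f x ∧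
    ¬ ∃ y : BitString n, hammingNeighbour x y ∧ paretoOptimal f y ∧ ∀ z ∈ P, f z ≠ f y

/-- `P` covers the whole Pareto front of `f`. -/
def coversFront {n : ℕ} (f : BitString n → ℤ × ℤ) (P : Finset (BitString n)) : Prop :=
  ∀ x : BitString n, paretoOptimal f x → ∃ z ∈ P, f z = f x

/-- The hypervolume contribution of `x` to `P` (for a population of mutually
non-dominated points, with reference point `r`). -/
def HVC {n : ℕ} (f : BitString n → ℤ × ℤ) (r : ℤ × ℤ) (x : BitString n)
    (P : Finset (BitString n)) : ℤ :=
  ((f x).1 - (((P.filter fun z => (f z).1 < (f x).1).image fun z => (f z).1).max.unbotD r.1)) *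
  ((f x).2 - (((P.filter fun z => (f z).2 < (f x).2).image fun z => (f z).2).max.unbotD r.2))

/-- Crowding distance of `x` in `P` with respect to a single objective `g`: infinite for the
boundary points, and otherwise the normalised difference between successor and predecessor. -/
def CDCobj {n : ℕ} (g : BitString n → ℤ) (x : BitString n)
    (P : Finset (BitString n)) : ℝ≥0∞ :=
  if (∀ z ∈ P, g x ≤ g z) ∨ (∀ z ∈ P, g z ≤ g x) then ⊤
  else
    (((((P.filter fun z => g x < g z).image g).min.untopD 0 -
        (((P.filter fun z => g z < g x).image g).max.unbotD 0)).toNat : ℝ≥0∞)) /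
      ((((P.image g).max.unbotD 0 - ((P.image g).min.untopD 0)).toNat : ℝ≥0∞))

/-- The crowding distance contribution of `x` to `P`. -/
def CDC {n : ℕ} (f : BitString n → ℤ × ℤ) (x : BitString n)
    (P : Finset (BitString n)) : ℝ≥0∞ :=
  CDCobj (fun z => (f z).1) x P + CDCobj (fun z => (f z).2) x P

/-- A diversity measure `c` is diversity-favouring on `S`. -/
def diversityFavouring {n : ℕ} {α : Type*} [Preorder α] (f : BitString n → ℤ × ℤ)
    (c : BitString n → Finset (BitString n) → α) (S : Set (BitString n)) : Prop :=
  ∀ P : Finset (BitString n), mutuallyNonDominated f P →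
    ∀ x ∈ P, ∀ y ∈ P, x ∈ S → y ∈ S → isBad f P x → isGood f P y → c x P < c y P

/-- The default bit string (used only to make selection kernels total). -/
def defaultBS (n : ℕ) : BitString n := fun _ => false

/-- Local mutation: flip a single uniformly random bit. -/
def localMutation {n : ℕ} (hn : 0 < n) (x : BitString n) : PMF (BitString n) :=
  haveI : Nonempty (Fin n) := ⟨⟨0, hn⟩⟩
  (PMF.uniformOfFintype (Fin n)).map (flipBit x)

/-- A Bernoulli coin with success probability `1/n` (for `n ≥ 1`). -/
def bitFlipCoin (n : ℕ) : PMF Bool :=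
  PMF.bernoulli (min ((n : ℝ≥0∞))⁻¹ 1).toNNReal
    (by simpa using ENNReal.toNNReal_mono ENNReal.one_ne_top (min_le_right ((n : ℝ≥0∞))⁻¹ 1))

/-- Global (standard bit) mutation: flip each bit independently with probability `1/n`. -/
def globalMutationAux {n : ℕ} : List (Fin n) → BitString n → PMF (BitString n)
  | [], x => PMF.pure x
  | i :: is, x => (bitFlipCoin n).bind fun b =>
      globalMutationAux is (if b then flipBit x i else x)

def globalMutation {n : ℕ} (x : BitString n) : PMF (BitString n) :=
  globalMutationAux (List.finRange n) x

/-- Survival selection: if `s'` is not dominated by any member of `P`, add `s'` to `P` and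
remove all members weakly dominated by `s'`. -/
def updatePop {n : ℕ} (f : BitString n → ℤ × ℤ) (P : Finset (BitString n))
    (s' : BitString n) : Finset (BitString n) :=
  if ∃ z ∈ P, dominates f z s' then P
  else insert s' (P.filter fun z => ¬ weaklyDominates f s' z)

/-- One iteration of (G)SEMO with parent-selection kernel `select` and mutation `mutate`. -/
def step {n : ℕ} (f : BitString n → ℤ × ℤ)
    (select : Finset (BitString n) → PMF (BitString n))
    (mutate : BitString n → PMF (BitString n))
    (P : Finset (BitString n)) : PMF (Finset (BitString n)) :=
  (select P).bind fun s => (mutate s).map fun s' => updatePop f P s'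

/-- The L-dominant attribute `L(x) = LO(x) + TZ(x)`. -/
def Ldom {n : ℕ} (x : BitString n) : ℕ := leadingOnes x + trailingZeros x

/-- The subpopulation of points with maximum L-dominant attribute. -/
def maxLSub {n : ℕ} (P : Finset (BitString n)) : Finset (BitString n) :=
  P.filter fun x => ∀ z ∈ P, Ldom z ≤ Ldom x

/-- One iteration of the modified GSEMO: parent selection (and the diversity contribution)
is restricted to the subpopulation of points with maximum L-dominant attribute. -/
def stepMod {n : ℕ} (f : BitString n → ℤ × ℤ)
    (select : Finset (BitString n) → PMF (BitString n))
    (mutate : BitString n → PMF (BitString n))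
    (P : Finset (BitString n)) : PMF (Finset (BitString n)) :=
  (select (maxLSub P)).bind fun s => (mutate s).map fun s' => updatePop f P s'

/-- Initial population: a single uniformly random bit string. -/
def initDist (n : ℕ) : PMF (Finset (BitString n)) :=
  (PMF.uniformOfFintype (BitString n)).map fun x => {x}

/-- Distribution of the population after `t` iterations. -/
def stateDist {S : Type*} (init : PMF S) (st : S → PMF S) : ℕ → PMF S
  | 0 => init
  | t + 1 => (stateDist init st t).bind st

/-- Expected number of iterations until an (absorbing) goal predicate is reached,
expressed as `∑ₜ Pr[goal not yet reached at time t]`. -/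
def expectedRuntime {S : Type*} (init : PMF S) (st : S → PMF S) (goal : S → Prop) : ℝ≥0∞ :=
  ∑' t : ℕ, (stateDist init st t).toOuterMeasure {s | ¬ goal s}

/-- Uniform parent selection. -/
def uniformSelect {n : ℕ} (P : Finset (BitString n)) : PMF (BitString n) :=
  if h : P.Nonempty then PMF.uniformOfFinset P h else PMF.pure (defaultBS n)

/-- Highest Diversity Contribution (HDC) parent selection: select an individual with
maximum diversity contribution, ties broken uniformly at random. -/
def HDCSelect {n : ℕ} {α : Type*} [LinearOrder α]
    (c : BitString n → Finset (BitString n) → α)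
    (P : Finset (BitString n)) : PMF (BitString n) :=
  if h : P.Nonempty then
    PMF.uniformOfFinset (P.filter fun x => ∀ y ∈ P, c y P ≤ c x P)
      (by
        obtain ⟨b, hb, hmax⟩ := P.exists_max_image (fun x => c x P) h
        exact ⟨b, Finset.mem_filter.mpr ⟨hb, hmax⟩⟩)
  else PMF.pure (defaultBS n)

/-- Non-Minimum Uniform at Random (NMUAR) parent selection: select uniformly at random
among all individuals whose diversity contribution is not minimal (from the whole
population if all contributions are equal). -/
def NMUARSelect {n : ℕ} {α : Type*} [LinearOrder α]
    (c : BitString n → Finset (BitString n) → α)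
    (P : Finset (BitString n)) : PMF (BitString n) :=
  if h : P.Nonempty then
    if hQ : (P.filter fun x => ∃ y ∈ P, c y P < c x P).Nonempty then
      PMF.uniformOfFinset _ hQ
    else PMF.uniformOfFinset P h
  else PMF.pure (defaultBS n)

/-- Tournament selection with tournament size `μ = |P|`: draw `μ` individuals uniformly at
random with replacement from `P` and select one with the highest diversity contribution
among the drawn multiset (ties broken uniformly at random). -/
def tournamentSelect {n : ℕ} {α : Type*} [LinearOrder α]
    (c : BitString n → Finset (BitString n) → α)
    (P : Finset (BitString n)) : PMF (BitString n) :=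
  if h : P.Nonempty then
    haveI : Nonempty {x // x ∈ P} := h.to_subtype
    (PMF.uniformOfFintype (Fin P.card → {x // x ∈ P})).bind fun g =>
      PMF.uniformOfFinset
        ((Finset.univ.image fun i => ((g i : {x // x ∈ P}) : BitString n)).filter fun x =>
          ∀ y ∈ Finset.univ.image fun i => ((g i : {x // x ∈ P}) : BitString n), c y P ≤ c x P)
        (by
          have hne : (Finset.univ.image fun i => ((g i : {x // x ∈ P}) : BitString n)).Nonempty := by
            refine ⟨(g ⟨0, Finset.card_pos.mpr h⟩ : {x // x ∈ P}), ?_⟩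
            exact Finset.mem_image.mpr ⟨⟨0, Finset.card_pos.mpr h⟩, Finset.mem_univ _, rfl⟩
          obtain ⟨b, hb, hmax⟩ :=
            Finset.exists_max_image _ (fun x => c x P) hne
          exact ⟨b, Finset.mem_filter.mpr ⟨hb, hmax⟩⟩)
  else PMF.pure (defaultBS n)

/-- Exponential ranking scheme: probability of selecting the `i`-th ranked individual
(1-indexed) in a population of size `μ`. -/
def rExp (i μ : ℕ) : ℝ≥0∞ :=
  (2 : ℝ≥0∞)⁻¹ ^ i / ∑ j ∈ Finset.Icc 1 μ, (2 : ℝ≥0∞)⁻¹ ^ j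

/-- Power-law ranking scheme. -/
def rPow (i μ : ℕ) : ℝ≥0∞ :=
  ((i : ℝ≥0∞) ^ 2)⁻¹ / ∑ j ∈ Finset.Icc 1 μ, ((j : ℝ≥0∞) ^ 2)⁻¹

/-- Harmonic ranking scheme. -/
def rHarm (i μ : ℕ) : ℝ≥0∞ :=
  (i : ℝ≥0∞)⁻¹ / ∑ j ∈ Finset.Icc 1 μ, (j : ℝ≥0∞)⁻¹


/-- `select` implements a rank-based parent-selection scheme with rank probabilities
`r i μ` (1-indexed rank `i`, population size `μ`) with respect to the diversity
contribution `c`, for some non-increasing ordering of the population by `c`. -/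
def implementsRankScheme {n : ℕ} {α : Type*} [Preorder α]
    (c : BitString n → Finset (BitString n) → α) (r : ℕ → ℕ → ℝ≥0∞)
    (select : Finset (BitString n) → PMF (BitString n)) : Prop :=
  ∀ P : Finset (BitString n), P.Nonempty →
    ∃ l : List (BitString n), l.Nodup ∧ l.toFinset = P ∧
      l.Chain' (fun a b => c b P ≤ c a P) ∧
      (∀ i : Fin l.length, select P (l.get i) = r (i.val + 1) P.card) ∧
      (∀ x : BitString n, x ∉ P → select P x = 0)

/-- The Pareto-optimal point `1^i 0^(n-i)` of LOTZ. -/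
def opt (n i : ℕ) : BitString n := fun t => decide ((t : ℕ) < i)

/-- The whole Pareto set of LOTZ as a population. -/
def frontSet (n : ℕ) : Finset (BitString n) := (Finset.range (n + 1)).image (opt n)

/-- `P` has a gap at position `i`. -/
def hasGapAt {n : ℕ} (P : Finset (BitString n)) (i : ℕ) : Prop :=
  opt n i ∉ P ∧ (∃ j, j < i ∧ opt n j ∈ P) ∧ (∃ k, i < k ∧ k ≤ n ∧ opt n k ∈ P)

/-- `P` has a gap at some position `i` with `n/4 ≤ i ≤ 3n/4`. -/
def gapInRange (n : ℕ) (P : Finset (BitString n)) : Prop :=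
  ∃ i : ℕ, n ≤ 4 * i ∧ 4 * i ≤ 3 * n ∧ hasGapAt P i

/-- `P` contains both `0^n` and `1^n`. -/
def bothExtremes (n : ℕ) (P : Finset (BitString n)) : Prop :=
  allZeros n ∈ P ∧ allOnes n ∈ P

/-- The chain stopped (frozen) as soon as `cond` holds. -/
def stopWhen {S : Type*} (cond : S → Prop) (st : S → PMF S) (s : S) : PMF S :=
  if cond s then PMF.pure s else st s

open Finset

lemma _root_.Fin.mem_iff_lt_card_of_isLowerSet {n : ℕ} {s : Finset (Fin n)}
    (hs : IsLowerSet (s : Set (Fin n))) (i : Fin n) : i ∈ s ↔ (i : ℕ) < #s := by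
  constructor
  · intro hi
    have := card_le_card fun j (hj : j ∈ Iic i) => hs (mem_Iic.1 hj) hi
    rw [Fin.card_Iic] at this
    omega
  · intro hi
    by_contra hi'
    have := card_le_card fun j (hj : j ∈ s) =>
      mem_Iio.2 (lt_of_not_ge fun hij => hi' (hs hij hj))
    rw [Fin.card_Iio] at this
    omega

lemma _root_.Fin.mem_iff_le_of_isUpperSet {n : ℕ} {s : Finset (Fin n)}
    (hs : IsUpperSet (s : Set (Fin n))) (i : Fin n) : i ∈ s ↔ n - #s ≤ (i : ℕ) := by
  rw [← not_iff_not, ← mem_compl, Fin.mem_iff_lt_card_of_isLowerSet (by simpa using hs.compl),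
    card_compl, Fintype.card_fin, not_le]

def spread {n : ℕ} (g : BitString n → ℤ) (P : Finset (BitString n)) : ℝ≥0∞ :=
  (((P.image g).max.unbotD 0 - (P.image g).min.untopD 0).toNat : ℝ≥0∞)

def IsFlanked {n : ℕ} (g : BitString n → ℤ) (P : Finset (BitString n)) (x : BitString n) :
    Prop :=
  (∃ z ∈ P, g z = g x - 1) ∧ ∃ z ∈ P, g z = g x + 1

section CrowdingDistance

variable {n : ℕ} {g : BitString n → ℤ} {P : Finset (BitString n)} {x : BitString n}

lemma spread_ne_top : spread g P ≠ ⊤ := ENNReal.natCast_ne_top _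

lemma spread_ne_zero_of_isFlanked (hx : IsFlanked g P x) : spread g P ≠ 0 := by
  obtain ⟨⟨zm, hzm, hgm⟩, zp, hzp, hgp⟩ := hx
  have hne : (P.image g).Nonempty := ⟨g zm, mem_image_of_mem g hzm⟩
  have hmax : g zp ≤ (P.image g).max' hne := le_max' _ _ (mem_image_of_mem g hzp)
  have hmin : (P.image g).min' hne ≤ g zm := min'_le _ _ (mem_image_of_mem g hzm)
  rw [spread, ← coe_max' hne, ← coe_min' hne, WithBot.unbotD_coe, WithTop.untopD_coe]
  exact_mod_cast (by omega : ((P.image g).max' hne - (P.image g).min' hne).toNat ≠ 0)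

lemma CDCobj_eq_of_isLeast_of_isGreatest {s p : ℤ}
    (hs : IsLeast ↑((P.filter fun z => g x < g z).image g) s)
    (hp : IsGreatest ↑((P.filter fun z => g z < g x).image g) p) :
    CDCobj g x P = ((s - p).toNat : ℝ≥0∞) / spread g P := by
  have hsne : ((P.filter fun z => g x < g z).image g).Nonempty := ⟨s, hs.1⟩
  have hpne : ((P.filter fun z => g z < g x).image g).Nonempty := ⟨p, hp.1⟩
  have hinterior : ¬ ((∀ z ∈ P, g x ≤ g z) ∨ ∀ z ∈ P, g z ≤ g x) := by
    obtain ⟨zs, hzs, -⟩ := mem_image.1 hsne.choose_spec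
    obtain ⟨zp, hzp, -⟩ := mem_image.1 hpne.choose_spec
    rw [mem_filter] at hzs hzp
    push Not
    exact ⟨⟨zp, hzp⟩, zs, hzs⟩
  rw [CDCobj, if_neg hinterior, ← coe_min' hsne, ← coe_max' hpne, WithTop.untopD_coe,
    WithBot.unbotD_coe, (isLeast_min' _ hsne).unique hs, (isGreatest_max' _ hpne).unique hp,
    spread]

lemma CDCobj_eq_top_or_exists :
    CDCobj g x P = ⊤ ∨
      ∃ s p : ℤ, (∃ z ∈ P, g z = s) ∧ (∃ z ∈ P, g z = p) ∧ p < g x ∧ g x < s ∧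
        CDCobj g x P = ((s - p).toNat : ℝ≥0∞) / spread g P := by
  by_cases hboundary : (∀ z ∈ P, g x ≤ g z) ∨ ∀ z ∈ P, g z ≤ g x
  · exact Or.inl (if_pos hboundary)
  push Not at hboundary
  obtain ⟨⟨zp, hzp, hlt⟩, zs, hzs, hgt⟩ := hboundary
  have hsne : ((P.filter fun z => g x < g z).image g).Nonempty :=
    ⟨g zs, mem_image_of_mem g (mem_filter.2 ⟨hzs, hgt⟩)⟩
  have hpne : ((P.filter fun z => g z < g x).image g).Nonempty :=
    ⟨g zp, mem_image_of_mem g (mem_filter.2 ⟨hzp, hlt⟩)⟩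
  obtain ⟨zs', hzs', hs⟩ := mem_image.1 (min'_mem _ hsne)
  obtain ⟨zp', hzp', hp⟩ := mem_image.1 (max'_mem _ hpne)
  rw [mem_filter] at hzs' hzp'
  exact Or.inr ⟨_, _, ⟨zs', hzs'.1, hs⟩, ⟨zp', hzp'.1, hp⟩, hp ▸ hzp'.2, hs ▸ hzs'.2,
    CDCobj_eq_of_isLeast_of_isGreatest (isLeast_min' _ hsne) (isGreatest_max' _ hpne)⟩

lemma CDCobj_eq_of_isFlanked (hx : IsFlanked g P x) : CDCobj g x P = 2 / spread g P := by
  obtain ⟨⟨zm, hzm, hgm⟩, zp, hzp, hgp⟩ := hx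
  have hs : IsLeast ↑((P.filter fun z => g x < g z).image g) (g x + 1) := by
    refine ⟨mem_image.2 ⟨zp, mem_filter.2 ⟨hzp, by omega⟩, hgp⟩, ?_⟩
    intro v hv
    obtain ⟨z, hz, rfl⟩ := mem_image.1 hv
    exact (mem_filter.1 hz).2
  have hp : IsGreatest ↑((P.filter fun z => g z < g x).image g) (g x - 1) := by
    refine ⟨mem_image.2 ⟨zm, mem_filter.2 ⟨hzm, by omega⟩, hgm⟩, ?_⟩
    intro v hv
    obtain ⟨z, hz, rfl⟩ := mem_image.1 hv
    exact Int.le_sub_one_of_lt (mem_filter.1 hz).2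
  rw [CDCobj_eq_of_isLeast_of_isGreatest hs hp, show g x + 1 - (g x - 1) = 2 by ring]
  rfl

lemma two_div_spread_le_CDCobj : 2 / spread g P ≤ CDCobj g x P := by
  obtain h | ⟨s, p, -, -, hp, hs, h⟩ := CDCobj_eq_top_or_exists (g := g) (P := P) (x := x)
  · exact h ▸ le_top
  rw [h]
  gcongr
  exact_mod_cast (by omega : 2 ≤ (s - p).toNat)

lemma two_div_spread_lt_CDCobj (h0 : spread g P ≠ 0) (hx : ¬ IsFlanked g P x) :
    2 / spread g P < CDCobj g x P := by
  obtain h | ⟨s, p, hs, hp, hpx, hxs, h⟩ := CDCobj_eq_top_or_exists (g := g) (P := P) (x := x)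
  · exact h ▸ ENNReal.div_lt_top (by simp) h0
  have h3 : 3 ≤ (s - p).toNat := by
    by_contra! hlt
    exact hx ⟨(by omega : p = g x - 1) ▸ hp, (by omega : s = g x + 1) ▸ hs⟩
  calc 2 / spread g P < 3 / spread g P := ENNReal.div_lt_div_right h0 spread_ne_top (by norm_num)
    _ ≤ CDCobj g x P := h ▸ ENNReal.div_le_div_right (by exact_mod_cast h3) _

end CrowdingDistance

theorem CDC_lt_of_isFlanked {n : ℕ} {f : BitString n → ℤ × ℤ} {P : Finset (BitString n)}
    {x y : BitString n}
    (hx : IsFlanked (fun z => (f z).1) P x ∧ IsFlanked (fun z => (f z).2) P x)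
    (hy : ¬ IsFlanked (fun z => (f z).1) P y ∨ ¬ IsFlanked (fun z => (f z).2) P y) :
    CDC f x P < CDC f y P := by
  obtain ⟨hx₁, hx₂⟩ := hx
  rw [CDC, CDC, CDCobj_eq_of_isFlanked hx₁, CDCobj_eq_of_isFlanked hx₂]
  have hfin₁ : 2 / spread (fun z => (f z).1) P ≠ ⊤ :=
    ENNReal.div_ne_top (by simp) (spread_ne_zero_of_isFlanked hx₁)
  have hfin₂ : 2 / spread (fun z => (f z).2) P ≠ ⊤ :=
    ENNReal.div_ne_top (by simp) (spread_ne_zero_of_isFlanked hx₂)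
  rcases hy with hy | hy
  · exact ENNReal.add_lt_add_of_lt_of_le hfin₂
      (two_div_spread_lt_CDCobj (spread_ne_zero_of_isFlanked hx₁) hy) two_div_spread_le_CDCobj
  · exact ENNReal.add_lt_add_of_le_of_lt hfin₁
      two_div_spread_le_CDCobj (two_div_spread_lt_CDCobj (spread_ne_zero_of_isFlanked hx₂) hy)

section BitFlips

variable {n : ℕ}

lemma flipBit_flipBit (x : BitString n) (i : Fin n) : flipBit (flipBit x i) i = x := by
  simp [flipBit]

lemma flipBit_apply_of_ne {x : BitString n} {i t : Fin n} (h : t ≠ i) : flipBit x i t = x t :=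
  Function.update_of_ne h _ _

lemma flipBit_apply_self_ne (x : BitString n) (i : Fin n) : flipBit x i i ≠ x i := by
  simp [flipBit]

end BitFlips

section Populations

variable {n : ℕ} {f : BitString n → ℤ × ℤ} {P : Finset (BitString n)}

lemma exists_mem_eq_of_isBad {x : BitString n} (hx : isBad f P x) (i : Fin n)
    (hi : paretoOptimal f (flipBit x i)) :
    ∃ z ∈ P, f z = f (flipBit x i) := by
  by_contra! h
  exact hx.2 ⟨_, ⟨i, rfl⟩, hi, h⟩

lemma lt_snd_of_fst_lt (hP : mutuallyNonDominated f P) {y z : BitString n} (hy : y ∈ P)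
    (hz : z ∈ P) (h : (f z).1 < (f y).1) : (f y).2 < (f z).2 := by
  by_contra! h'
  exact hP z hz y hy ⟨h.le, h', fun e => h.ne (congrArg Prod.fst e)⟩

lemma lt_fst_of_snd_lt (hP : mutuallyNonDominated f P) {y z : BitString n} (hy : y ∈ P)
    (hz : z ∈ P) (h : (f z).2 < (f y).2) : (f y).1 < (f z).1 := by
  by_contra! h'
  exact hP z hz y hy ⟨h', h.le, fun e => h.ne (congrArg Prod.snd e)⟩

end Populations

section OneMinMax

variable {n : ℕ}

lemma onesCount_flipBit_of_true {x : BitString n} {i : Fin n} (h : x i = true) :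
    onesCount (flipBit x i) + 1 = onesCount x := by
  have hset : univ.filter (fun j => flipBit x i j = true) =
      (univ.filter fun j => x j = true).erase i := by
    ext j
    rcases eq_or_ne j i with rfl | hj
    · simp [flipBit, h]
    · simp [flipBit_apply_of_ne hj, hj]
  rw [onesCount, onesCount, hset, card_erase_add_one (by simp [h])]

lemma onesCount_flipBit_of_false {x : BitString n} {i : Fin n} (h : x i = false) :
    onesCount (flipBit x i) = onesCount x + 1 := by
  have := onesCount_flipBit_of_true (x := flipBit x i) (i := i) (by simp [flipBit, h])
  rw [flipBit_flipBit] at this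
  omega

lemma paretoOptimal_OneMinMax (x : BitString n) : paretoOptimal OneMinMax x := by
  rintro ⟨y, h₁, h₂, hne⟩
  simp only [OneMinMax] at h₁ h₂ hne
  exact hne (by rw [show onesCount x = onesCount y by omega])

lemma isFlanked_of_isBad_OneMinMax {P : Finset (BitString n)} {x : BitString n}
    (hx : isBad OneMinMax P x) (hx0 : x ≠ allZeros n) (hx1 : x ≠ allOnes n) :
    IsFlanked (fun z => (OneMinMax z).1) P x ∧ IsFlanked (fun z => (OneMinMax z).2) P x := by
  obtain ⟨i, hi⟩ : ∃ i, x i = true := by simpa [allZeros, Function.ne_iff] using hx0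
  obtain ⟨j, hj⟩ : ∃ j, x j = false := by simpa [allOnes, Function.ne_iff] using hx1
  obtain ⟨zm, hzm, hm⟩ := exists_mem_eq_of_isBad hx i (paretoOptimal_OneMinMax _)
  obtain ⟨zp, hzp, hp⟩ := exists_mem_eq_of_isBad hx j (paretoOptimal_OneMinMax _)
  have hcm := onesCount_flipBit_of_true hi
  have hcp := onesCount_flipBit_of_false hj
  simp only [OneMinMax, Prod.mk.injEq] at hm hp
  refine ⟨⟨⟨zm, hzm, ?_⟩, zp, hzp, ?_⟩, ⟨zp, hzp, ?_⟩, zm, hzm, ?_⟩ <;>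
    simp only [OneMinMax] <;> omega

lemma not_isFlanked_of_isGood_OneMinMax {P : Finset (BitString n)} {y : BitString n}
    (hy : isGood OneMinMax P y) : ¬ IsFlanked (fun z => (OneMinMax z).1) P y := by
  obtain ⟨-, w, ⟨i, rfl⟩, -, hw⟩ := hy
  -- objective vectors of OneMinMax are determined by their first coordinate
  have hmiss : ∀ z ∈ P, onesCount z ≠ onesCount (flipBit y i) := fun z hz h =>
    hw z hz (by simp only [OneMinMax, h])
  rintro ⟨⟨zm, hzm, hm⟩, zp, hzp, hp⟩
  simp only [OneMinMax] at hm hp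
  cases hi : y i
  · exact hmiss zp hzp (by have := onesCount_flipBit_of_false hi; omega)
  · exact hmiss zm hzm (by have := onesCount_flipBit_of_true hi; omega)

end OneMinMax

section LOTZ

variable {n : ℕ}

lemma lt_leadingOnes_iff (x : BitString n) (i : Fin n) :
    (i : ℕ) < leadingOnes x ↔ ∀ j ≤ i, x j = true := by
  rw [leadingOnes, ← Fin.mem_iff_lt_card_of_isLowerSet, mem_filter]
  · exact and_iff_right (mem_univ i)
  · intro a b hba ha
    simp only [coe_filter, mem_univ, true_and] at ha ⊢
    exact fun j hj => ha j (hj.trans hba)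

lemma sub_trailingZeros_le_iff (x : BitString n) (i : Fin n) :
    n - trailingZeros x ≤ (i : ℕ) ↔ ∀ j, i ≤ j → x j = false := by
  rw [trailingZeros, ← Fin.mem_iff_le_of_isUpperSet, mem_filter]
  · exact and_iff_right (mem_univ i)
  · intro a b hab ha
    simp only [coe_filter, mem_univ, true_and] at ha ⊢
    exact fun j hj => ha j (hab.trans hj)

lemma leadingOnes_add_trailingZeros_le (x : BitString n) :
    leadingOnes x + trailingZeros x ≤ n := by
  by_contra! h
  have hLO : leadingOnes x ≤ n := (card_le_univ _).trans (Fintype.card_fin n).le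
  have hTZ : trailingZeros x ≤ n := (card_le_univ _).trans (Fintype.card_fin n).le
  let i : Fin n := ⟨n - trailingZeros x, by omega⟩
  have hone := (lt_leadingOnes_iff x i).1 (by simp only [i]; omega) i le_rfl
  have hzero := (sub_trailingZeros_le_iff x i).1 le_rfl i le_rfl
  rw [hone] at hzero
  exact Bool.noConfusion hzero

lemma leadingOnes_opt {k : ℕ} (hk : k ≤ n) : leadingOnes (opt n k) = k := by
  have hset : univ.filter (fun i : Fin n => ∀ j ≤ i, opt n k j = true) =
      univ.filter fun i : Fin n => (i : ℕ) < k := by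
    ext i
    simp only [mem_filter, mem_univ, true_and, opt, decide_eq_true_eq]
    exact ⟨fun h => h i le_rfl, fun h j hj => lt_of_le_of_lt hj h⟩
  rw [leadingOnes, hset, Fin.card_filter_val_lt, min_eq_right hk]

lemma trailingZeros_opt {k : ℕ} (hk : k ≤ n) : trailingZeros (opt n k) = n - k := by
  have hset : univ.filter (fun i : Fin n => ∀ j, i ≤ j → opt n k j = false) =
      univ.filter fun i : Fin n => ¬ (i : ℕ) < k := by
    ext i
    simp only [mem_filter, mem_univ, true_and, opt, decide_eq_false_iff_not, not_lt]
    exact ⟨fun h => h i le_rfl, fun h j hj => h.trans hj⟩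
  have := card_filter_add_card_filter_not (s := (univ : Finset (Fin n))) (fun i => (i : ℕ) < k)
  rw [Fin.card_filter_val_lt, min_eq_right hk, card_univ, Fintype.card_fin] at this
  rw [trailingZeros, hset]
  omega

lemma LOTZ_opt {k : ℕ} (hk : k ≤ n) : LOTZ (opt n k) = ((k : ℤ), (n : ℤ) - k) := by
  simp [LOTZ, leadingOnes_opt hk, trailingZeros_opt hk, Nat.cast_sub hk]

lemma LOTZ_fst_add_snd_le (x : BitString n) : (LOTZ x).1 + (LOTZ x).2 ≤ n := by
  simp only [LOTZ]
  exact_mod_cast leadingOnes_add_trailingZeros_le x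

lemma opt_zero : opt n 0 = allZeros n := by
  funext t
  simp [opt, allZeros]

lemma opt_self : opt n n = allOnes n := by
  funext t
  simp [opt, allOnes]

lemma eq_opt_of_leadingOnes_add_trailingZeros {x : BitString n}
    (h : leadingOnes x + trailingZeros x = n) : x = opt n (leadingOnes x) := by
  funext t
  by_cases ht : (t : ℕ) < leadingOnes x
  · simp [opt, ht, (lt_leadingOnes_iff x t).1 ht t le_rfl]
  · simp [opt, ht, (sub_trailingZeros_le_iff x t).1 (by omega) t le_rfl]

lemma paretoOptimal_LOTZ_iff {x : BitString n} :
    paretoOptimal LOTZ x ↔ ∃ k ≤ n, x = opt n k := by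
  constructor
  · intro hx
    have hsum := leadingOnes_add_trailingZeros_le x
    -- otherwise `1^(n - TZ) 0^TZ` dominates `x`
    have heq : leadingOnes x + trailingZeros x = n := by
      by_contra hne
      have hle : n - trailingZeros x ≤ n := Nat.sub_le _ _
      refine hx ⟨opt n (n - trailingZeros x), ?_, ?_, fun e => ?_⟩ <;>
        simp only [LOTZ, leadingOnes_opt hle, trailingZeros_opt hle, Prod.mk.injEq] at * <;> omega
    exact ⟨_, by omega, eq_opt_of_leadingOnes_add_trailingZeros heq⟩
  · rintro ⟨k, hk, rfl⟩ ⟨w, h₁, h₂, hne⟩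
    have hw := LOTZ_fst_add_snd_le w
    rw [LOTZ_opt hk] at h₁ h₂ hne
    exact hne (Prod.ext (by dsimp only at *; omega) (by dsimp only at *; omega))

lemma flipBit_opt {k : ℕ} (hk : k < n) : flipBit (opt n k) ⟨k, hk⟩ = opt n (k + 1) := by
  funext t
  rcases eq_or_ne t ⟨k, hk⟩ with rfl | ht
  · simp [flipBit, opt]
  · have : (t : ℕ) ≠ k := fun h => ht (Fin.ext h)
    rw [flipBit_apply_of_ne ht]
    simp only [opt]
    exact decide_eq_decide.2 (by omega)

lemma succ_eq_of_flipBit_opt_eq {m k : ℕ} (hmk : m < k) (hk : k ≤ n) {i : Fin n}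
    (h : flipBit (opt n k) i = opt n m) : m + 1 = k := by
  -- `opt n m` and `opt n k` differ at every position in `[m, k)`, but a flip changes only `i`
  have hdiff : ∀ t : Fin n, m ≤ t → (t : ℕ) < k → t = i := by
    intro t hmt htk
    by_contra hti
    have := congrFun h t
    rw [flipBit_apply_of_ne hti] at this
    simp only [opt, decide_eq_decide] at this
    omega
  by_contra hne
  have := hdiff ⟨m, by omega⟩ le_rfl hmk
  have := hdiff ⟨m + 1, by omega⟩ (by simp) (by simp only; omega)
  simp_all [Fin.ext_iff]

lemma eq_add_one_or_of_flipBit_opt_eq {m k : ℕ} (hm : m ≤ n) (hk : k ≤ n) {i : Fin n}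
    (h : flipBit (opt n k) i = opt n m) : m + 1 = k ∨ m = k + 1 := by
  rcases lt_trichotomy m k with hmk | rfl | hkm
  · exact Or.inl (succ_eq_of_flipBit_opt_eq hmk hk h)
  · exact absurd (congrFun h i) (flipBit_apply_self_ne _ _)
  · refine Or.inr (succ_eq_of_flipBit_opt_eq (i := i) hkm hm ?_).symm
    rw [← h, flipBit_flipBit]

lemma isFlanked_of_isBad_LOTZ {P : Finset (BitString n)} {x : BitString n}
    (hx : isBad LOTZ P x) (hx0 : x ≠ allZeros n) (hx1 : x ≠ allOnes n) :
    IsFlanked (fun z => (LOTZ z).1) P x ∧ IsFlanked (fun z => (LOTZ z).2) P x := by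
  obtain ⟨k, hk, rfl⟩ := paretoOptimal_LOTZ_iff.1 hx.1
  obtain ⟨a, rfl⟩ : ∃ a, k = a + 1 :=
    Nat.exists_eq_add_one.2 (Nat.pos_of_ne_zero fun h => hx0 (h ▸ opt_zero))
  have han : a + 1 < n := lt_of_le_of_ne hk fun h => hx1 (h ▸ opt_self)
  have hdown : flipBit (opt n (a + 1)) ⟨a, by omega⟩ = opt n a := by
    rw [← flipBit_opt (by omega : a < n), flipBit_flipBit]
  obtain ⟨zm, hzm, hm⟩ := exists_mem_eq_of_isBad hx ⟨a, by omega⟩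
    (hdown ▸ paretoOptimal_LOTZ_iff.2 ⟨a, by omega, rfl⟩)
  obtain ⟨zp, hzp, hp⟩ := exists_mem_eq_of_isBad hx ⟨a + 1, han⟩
    (flipBit_opt han ▸ paretoOptimal_LOTZ_iff.2 ⟨a + 2, han, rfl⟩)
  rw [hdown, LOTZ_opt (by omega)] at hm
  rw [flipBit_opt han, LOTZ_opt han] at hp
  refine ⟨⟨⟨zm, hzm, ?_⟩, zp, hzp, ?_⟩, ⟨zp, hzp, ?_⟩, zm, hzm, ?_⟩ <;>
    simp only [hm, hp, LOTZ_opt hk] <;> push_cast <;> ring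

lemma not_isFlanked_of_isGood_LOTZ {P : Finset (BitString n)} (hP : mutuallyNonDominated LOTZ P)
    {y : BitString n} (hyP : y ∈ P) (hy : isGood LOTZ P y) :
    ¬ IsFlanked (fun z => (LOTZ z).1) P y ∨ ¬ IsFlanked (fun z => (LOTZ z).2) P y := by
  obtain ⟨hyo, w, ⟨i, rfl⟩, hwo, hw⟩ := hy
  obtain ⟨k, hk, rfl⟩ := paretoOptimal_LOTZ_iff.1 hyo
  obtain ⟨m, hm, hwm⟩ := paretoOptimal_LOTZ_iff.1 hwo
  rw [hwm] at hw
  -- a member of `P` attaining the missing value in one objective is not dominated by `y`,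
  -- which forces its objective vector to be that of `opt n m`
  rcases eq_add_one_or_of_flipBit_opt_eq hm hk hwm with rfl | rfl
  · refine Or.inl fun ⟨⟨z, hz, hzv⟩, _⟩ => hw z hz ?_
    beta_reduce at hzv
    have hlt := lt_snd_of_fst_lt hP hyP hz (by rw [hzv]; omega)
    have hsum := LOTZ_fst_add_snd_le z
    rw [LOTZ_opt hk] at hzv hlt
    rw [LOTZ_opt hm]
    exact Prod.ext (by push_cast at hzv ⊢; omega) (by push_cast at *; omega)
  · refine Or.inr fun ⟨⟨z, hz, hzv⟩, _⟩ => hw z hz ?_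
    beta_reduce at hzv
    have hlt := lt_fst_of_snd_lt hP hyP hz (by rw [hzv]; omega)
    have hsum := LOTZ_fst_add_snd_le z
    rw [LOTZ_opt hk] at hzv hlt
    rw [LOTZ_opt hm]
    exact Prod.ext (by push_cast at *; omega) (by push_cast at hzv ⊢; omega)

end LOTZ

theorem cdc_diversity_favouring_general (n : ℕ) (f : BitString n → ℤ × ℤ)
    (hf : f = OneMinMax ∨ f = LOTZ)
    (P : Finset (BitString n)) (hP : mutuallyNonDominated f P)
    (x y : BitString n) (hy : y ∈ P)
    (hx0 : x ≠ allZeros n) (hx1 : x ≠ allOnes n) :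
    isBad f P x → isGood f P y → CDC f x P < CDC f y P := by
  intro hbad hgood
  rcases hf with rfl | rfl
  · exact CDC_lt_of_isFlanked (isFlanked_of_isBad_OneMinMax hbad hx0 hx1)
      (Or.inl (not_isFlanked_of_isGood_OneMinMax hgood))
  · exact CDC_lt_of_isFlanked (isFlanked_of_isBad_LOTZ hbad hx0 hx1)
      (not_isFlanked_of_isGood_LOTZ hP hy hgood)

/-- For OneMinMax and LOTZ, the crowding distance contribution is
diversity-favouring on `{0,1}ⁿ \ {0ⁿ, 1ⁿ}`. -/
theorem cdc_diversity_favouring (n : ℕ) (f : BitString n → ℤ × ℤ)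
    (hf : f = OneMinMax ∨ f = LOTZ)
    (P : Finset (BitString n)) (hP : mutuallyNonDominated f P)
    (x y : BitString n) (hx : x ∈ P) (hy : y ∈ P)
    (hxo : paretoOptimal f x) (hyo : paretoOptimal f y)
    (hx0 : x ≠ allZeros n) (hx1 : x ≠ allOnes n)
    (hy0 : y ≠ allZeros n) (hy1 : y ≠ allOnes n) :
    isBad f P x → isGood f P y → CDC f x P < CDC f y P :=
  cdc_diversity_favouring_general n f hf P hP x y hy hx0 hx1

end EMO
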